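/- Let L₁ and L₂ be countable classes of linear orders such that every member of L₁ ∪ L₂ is isomorphic to a linear order of the form ω·i + K where ω·i is not isomorphic to any interval of K (i ≥ 1 fixed). Then Shuf(L₁) ≅ Shuf(L₂) if and only if L₁ and L₂ contain the same linear orders up to isomorphism. -/

import Mathlib

/-- `c : ℚ → I` is a dense `I`-coloring. -/
def DenseColoring {I : Type} (c : ℚ → I) : Prop :=
  ∀ x y : ℚ, x < y → ∀ i : I, ∃ z : ℚ, x < z ∧ z < y ∧ c z = i

/-- `L` is of the form `ω·i + K` where `ω·i` (here `Lex (Fin i × ℕ)`) is not isomorphic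
to any interval of `K`. -/
def OmegaIPlus (i : ℕ) (L : Type) [LinearOrder L] : Prop :=
  ∃ (K : Type) (_ : LinearOrder K),
    Nonempty (L ≃o (Lex (Fin i × ℕ) ⊕ₗ K)) ∧
    ∀ s : Set K, s.OrdConnected → ¬ Nonempty (↥s ≃o Lex (Fin i × ℕ))

/-!
Call `p < q` *separated* if two disjoint intervals of type `ω·i` lie strictly between them.
In `ω·i + K`, where `K` has no interval of type `ω·i`, every interval of type `ω·i` contains
cofinally many points of the prefix `ω·i`, so any two such intervals meet. Over a dense base,
two points of a shuffle are therefore separated exactly when they lie in different blocks.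
Separation is invariant under order isomorphisms, so an isomorphism of shuffles maps blocks onto
blocks, and every member of either class is isomorphic to a member of the other. Conversely, if
the classes agree, a back-and-forth argument on `ℚ` respecting both dense colorings yields an
automorphism of `ℚ` that matches isomorphic blocks.
-/

open Set

lemma Set.OrdConnected.image_orderEmbedding {α β : Type*} [Preorder α] [Preorder β] {S : Set α}
    (hS : S.OrdConnected) (e : α ↪o β) (he : (range e).OrdConnected) : (e '' S).OrdConnected := by
  refine ⟨?_⟩
  rintro _ ⟨a, ha, rfl⟩ _ ⟨b, hb, rfl⟩ z hz
  obtain ⟨c, rfl⟩ := he.out ⟨a, rfl⟩ ⟨b, rfl⟩ hz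
  exact ⟨c, hS.out ha hb ⟨e.le_iff_le.1 hz.1, e.le_iff_le.1 hz.2⟩, rfl⟩

lemma Set.isCofinal_of_orderIso {α : Type*} [LinearOrder α] [WellFoundedLT α] {S : Set α}
    (e : S ≃o α) : IsCofinal S := fun m ↦
  ⟨e.symm m, (e.symm m).2, ((Subtype.strictMono_coe _).comp e.symm.strictMono).le_apply⟩

abbrev OmegaMul (i : ℕ) : Type := Lex (Fin i × ℕ)

section Intervals

variable {i : ℕ} {α β : Type*} [LinearOrder α] [LinearOrder β]

def IsOmegaMulInterval (i : ℕ) (S : Set α) : Prop :=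
  S.OrdConnected ∧ Nonempty (S ≃o OmegaMul i)

lemma isOmegaMulInterval_univ : IsOmegaMulInterval i (univ : Set (OmegaMul i)) :=
  ⟨ordConnected_univ, ⟨OrderIso.Set.univ⟩⟩

lemma IsOmegaMulInterval.image {S : Set α} (hS : IsOmegaMulInterval i S) (e : α ↪o β)
    (he : (range e).OrdConnected) : IsOmegaMulInterval i (e '' S) :=
  ⟨hS.1.image_orderEmbedding e he,
    ⟨((e.strictMono.strictMonoOn S).orderIso e S).symm.trans hS.2.some⟩⟩

lemma IsOmegaMulInterval.image_orderIso {S : Set α} (hS : IsOmegaMulInterval i S) (e : α ≃o β) :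
    IsOmegaMulInterval i (e '' S) :=
  hS.image e.toOrderEmbedding (by simpa using ordConnected_univ)

lemma IsOmegaMulInterval.preimage {S : Set β} (hS : IsOmegaMulInterval i S) (e : α ↪o β)
    (hSe : S ⊆ range e) : IsOmegaMulInterval i (e ⁻¹' S) :=
  ⟨hS.1.preimage_mono e.monotone,
    ⟨((e.strictMono.strictMonoOn _).orderIso e _).trans
      ((OrderIso.setCongr _ _ (image_preimage_eq_of_subset hSe)).trans hS.2.some)⟩⟩

lemma nonempty_omegaMul_of_forall_not_isOmegaMulInterval
    (hK : ∀ s : Set α, ¬ IsOmegaMulInterval i s) : Nonempty (OmegaMul i) := by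
  by_contra h
  rw [not_nonempty_iff] at h
  exact hK ∅ ⟨ordConnected_empty, ⟨OrderIso.ofIsEmpty _ _⟩⟩

end Intervals

section LexSum

variable {i : ℕ} {α β : Type*} [LinearOrder α] [LinearOrder β]

def sumLexInl : α ↪o α ⊕ₗ β := OrderEmbedding.ofStrictMono _ Sum.Lex.inl_strictMono

def sumLexInr : β ↪o α ⊕ₗ β := OrderEmbedding.ofStrictMono _ Sum.Lex.inr_strictMono

lemma ordConnected_range_sumLexInl : (range (sumLexInl : α ↪o α ⊕ₗ β)).OrdConnected := by
  refine ⟨?_⟩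
  rintro _ - _ ⟨a, rfl⟩ z hz
  rcases z with b | k
  · exact ⟨b, rfl⟩
  · exact absurd hz.2 Sum.Lex.not_inr_le_inl

lemma IsOmegaMulInterval.exists_inl_ge (hK : ∀ s : Set β, ¬ IsOmegaMulInterval i s)
    {S : Set (OmegaMul i ⊕ₗ β)} (hS : IsOmegaMulInterval i S) (m : OmegaMul i) :
    ∃ a, m ≤ a ∧ Sum.inlₗ a ∈ S := by
  by_cases hl : S ⊆ range sumLexInl
  · obtain ⟨a, ha, hma⟩ := isCofinal_of_orderIso (hS.preimage sumLexInl hl).2.some m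
    exact ⟨a, hma, ha⟩
  obtain ⟨p, hpS, hp⟩ := not_subset.1 hl
  obtain ⟨k, rfl⟩ : ∃ k, p = Sum.inrₗ k := by
    rcases p with a | k
    exacts [absurd ⟨a, rfl⟩ hp, ⟨k, rfl⟩]
  by_cases hr : S ⊆ range sumLexInr
  · exact absurd (hS.preimage sumLexInr hr) (hK _)
  obtain ⟨q, hqS, hq⟩ := not_subset.1 hr
  obtain ⟨a, rfl⟩ : ∃ a, q = Sum.inlₗ a := by
    rcases q with a | k
    exacts [⟨a, rfl⟩, absurd ⟨k, rfl⟩ hq]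
  exact ⟨max a m, le_max_right a m, hS.1.out hqS hpS
    ⟨Sum.Lex.inl_le_inl_iff.2 (le_max_left a m), Sum.Lex.inl_le_inr _ _⟩⟩

lemma IsOmegaMulInterval.inter_nonempty_of_sumLex (hK : ∀ s : Set β, ¬ IsOmegaMulInterval i s)
    {S T : Set (OmegaMul i ⊕ₗ β)} (hS : IsOmegaMulInterval i S) (hT : IsOmegaMulInterval i T) :
    (S ∩ T).Nonempty := by
  obtain ⟨m⟩ := nonempty_omegaMul_of_forall_not_isOmegaMulInterval hK
  obtain ⟨a, -, ha⟩ := hS.exists_inl_ge hK m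
  obtain ⟨b, hab, hb⟩ := hT.exists_inl_ge hK a
  obtain ⟨c, hbc, hc⟩ := hS.exists_inl_ge hK b
  exact ⟨_, hS.1.out ha hc ⟨Sum.Lex.inl_le_inl_iff.2 hab, Sum.Lex.inl_le_inl_iff.2 hbc⟩, hb⟩

end LexSum

namespace OmegaIPlus

variable {i : ℕ} {L : Type} [LinearOrder L]

lemma inter_nonempty (hL : OmegaIPlus i L) {S T : Set L} (hS : IsOmegaMulInterval i S)
    (hT : IsOmegaMulInterval i T) : (S ∩ T).Nonempty := by
  obtain ⟨K, _, ⟨e⟩, hK⟩ := hL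
  have := (hS.image_orderIso e).inter_nonempty_of_sumLex (fun s hs ↦ hK s hs.1 hs.2)
    (hT.image_orderIso e)
  rw [← image_inter e.injective] at this
  exact this.of_image

lemma exists_isOmegaMulInterval (hL : OmegaIPlus i L) : ∃ S : Set L, IsOmegaMulInterval i S := by
  obtain ⟨K, _, ⟨e⟩, -⟩ := hL
  exact ⟨_, ((isOmegaMulInterval_univ.image sumLexInl ordConnected_range_sumLexInl).image_orderIso
    e.symm)⟩

lemma nonempty (hL : OmegaIPlus i L) : Nonempty L := by
  obtain ⟨K, _, ⟨e⟩, hK⟩ := hL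
  obtain ⟨w⟩ := nonempty_omegaMul_of_forall_not_isOmegaMulInterval (fun s hs ↦ hK s hs.1 hs.2)
  exact ⟨e.symm (Sum.inlₗ w)⟩

end OmegaIPlus

section Separated

variable {i : ℕ} {T U : Type*} [LinearOrder T] [LinearOrder U]

def Separated (i : ℕ) (p q : T) : Prop :=
  ∃ A B : Set T, IsOmegaMulInterval i A ∧ IsOmegaMulInterval i B ∧
    A ⊆ Ioo p q ∧ B ⊆ Ioo p q ∧ Disjoint A B

lemma Separated.map {p q : T} (h : Separated i p q) (e : T ≃o U) : Separated i (e p) (e q) := by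
  obtain ⟨A, B, hA, hB, hAI, hBI, hAB⟩ := h
  refine ⟨e '' A, e '' B, hA.image_orderIso e, hB.image_orderIso e, ?_, ?_,
    (disjoint_image_iff e.injective).2 hAB⟩
  · exact e.image_Ioo p q ▸ image_mono hAI
  · exact e.image_Ioo p q ▸ image_mono hBI

lemma OrderIso.separated_iff (e : T ≃o U) {p q : T} :
    Separated i (e p) (e q) ↔ Separated i p q :=
  ⟨fun h ↦ by simpa using h.map e.symm, fun h ↦ h.map e⟩

end Separated

section SigmaLex

variable {Q : Type*} [LinearOrder Q]

section

variable {f : Q → Type*} [∀ x, LinearOrder (f x)]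

variable (f) in
def sigmaLexMk (x : Q) : f x ↪o Σₗ x, f x :=
  OrderEmbedding.ofStrictMono (fun a ↦ toLex ⟨x, a⟩) fun _ _ h ↦
    Sigma.Lex.lt_def.2 (Or.inr ⟨rfl, h⟩)

lemma Sigma.Lex.fst_le_fst {p q : Σₗ x, f x} (h : p ≤ q) : p.1 ≤ q.1 := by
  rcases Sigma.Lex.le_def.1 h with h | ⟨h, -⟩
  exacts [h.le, h.le]

lemma Sigma.Lex.lt_of_fst_lt {p q : Σₗ x, f x} (h : p.1 < q.1) : p < q :=
  Sigma.Lex.lt_def.2 (Or.inl h)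

lemma mem_range_sigmaLexMk {x : Q} {p : Σₗ x, f x} : p ∈ range (sigmaLexMk f x) ↔ p.1 = x := by
  refine ⟨?_, fun h ↦ ?_⟩
  · rintro ⟨a, rfl⟩
    rfl
  · obtain ⟨y, a⟩ := p
    subst h
    exact ⟨a, rfl⟩

lemma range_sigmaLexMk_subset_Ioo {p q : Σₗ x, f x} {z : Q} (hpz : p.1 < z) (hzq : z < q.1) :
    range (sigmaLexMk f z) ⊆ Ioo p q := by
  rintro _ ⟨a, rfl⟩
  exact ⟨Sigma.Lex.lt_of_fst_lt hpz, Sigma.Lex.lt_of_fst_lt hzq⟩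

lemma ordConnected_range_sigmaLexMk (x : Q) : (range (sigmaLexMk f x)).OrdConnected :=
  ⟨fun _ hp _ hq _ hr ↦ mem_range_sigmaLexMk.2 <| le_antisymm
    ((Sigma.Lex.fst_le_fst hr.2).trans (mem_range_sigmaLexMk.1 hq).le)
    ((mem_range_sigmaLexMk.1 hp).ge.trans (Sigma.Lex.fst_le_fst hr.1))⟩

end

variable {i : ℕ} {f g : Q → Type} [∀ x, LinearOrder (f x)] [∀ y, LinearOrder (g y)]

lemma Separated.fst_lt (hf : ∀ x, OmegaIPlus i (f x)) {p q : Σₗ x, f x} (h : Separated i p q) :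
    p.1 < q.1 := by
  obtain ⟨A, B, hA, hB, hAI, hBI, hAB⟩ := h
  by_contra! hqp
  have hblock : Ioo p q ⊆ range (sigmaLexMk f p.1) := fun s hs ↦ mem_range_sigmaLexMk.2 <|
    le_antisymm ((Sigma.Lex.fst_le_fst hs.2.le).trans hqp) (Sigma.Lex.fst_le_fst hs.1.le)
  obtain ⟨a, haA, haB⟩ := (hf p.1).inter_nonempty (hA.preimage _ (hAI.trans hblock))
    (hB.preimage _ (hBI.trans hblock))
  exact hAB.ne_of_mem haA haB rfl

lemma separated_of_fst_lt [DenselyOrdered Q] (hf : ∀ x, OmegaIPlus i (f x)) {p q : Σₗ x, f x}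
    (h : p.1 < q.1) : Separated i p q := by
  have hblock : ∀ z, ∃ S ⊆ range (sigmaLexMk f z), IsOmegaMulInterval i S := fun z ↦ by
    obtain ⟨P, hP⟩ := (hf z).exists_isOmegaMulInterval
    exact ⟨_, image_subset_range _ _, hP.image _ (ordConnected_range_sigmaLexMk z)⟩
  obtain ⟨z₁, hpz₁, hz₁q⟩ := exists_between h
  obtain ⟨z₂, hz₁₂, hz₂q⟩ := exists_between hz₁q
  obtain ⟨A, hAz, hA⟩ := hblock z₁
  obtain ⟨B, hBz, hB⟩ := hblock z₂
  refine ⟨A, B, hA, hB, hAz.trans (range_sigmaLexMk_subset_Ioo hpz₁ hz₁q),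
    hBz.trans (range_sigmaLexMk_subset_Ioo (hpz₁.trans hz₁₂) hz₂q),
    disjoint_left.2 fun s hsA hsB ↦ ?_⟩
  exact hz₁₂.ne ((mem_range_sigmaLexMk.1 (hAz hsA)).symm.trans (mem_range_sigmaLexMk.1 (hBz hsB)))

lemma separated_iff_fst_lt [DenselyOrdered Q] (hf : ∀ x, OmegaIPlus i (f x)) {p q : Σₗ x, f x} :
    Separated i p q ↔ p.1 < q.1 :=
  ⟨Separated.fst_lt hf, separated_of_fst_lt hf⟩

lemma OrderIso.fst_eq_fst_iff [DenselyOrdered Q] (hf : ∀ x, OmegaIPlus i (f x))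
    (hg : ∀ y, OmegaIPlus i (g y)) (F : (Σₗ x, f x) ≃o Σₗ y, g y) {p q : Σₗ x, f x} :
    (F p).1 = (F q).1 ↔ p.1 = q.1 := by
  have hlt (p q : Σₗ x, f x) : (F p).1 < (F q).1 ↔ p.1 < q.1 := by
    rw [← separated_iff_fst_lt hg, ← separated_iff_fst_lt hf, F.separated_iff]
  simp only [le_antisymm_iff, ← not_lt, hlt]

lemma OrderIso.exists_orderIso_fiber [DenselyOrdered Q] (hf : ∀ x, OmegaIPlus i (f x))
    (hg : ∀ y, OmegaIPlus i (g y)) (F : (Σₗ x, f x) ≃o Σₗ y, g y) (x : Q) :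
    ∃ y, Nonempty (f x ≃o g y) := by
  obtain ⟨a⟩ := (hf x).nonempty
  set y := (F (sigmaLexMk f x a)).1
  have himage : F '' range (sigmaLexMk f x) = range (sigmaLexMk g y) := by
    ext r
    have := F.fst_eq_fst_iff hf hg (p := F.symm r) (q := sigmaLexMk f x a)
    rw [F.apply_symm_apply] at this
    rw [F.image_eq_preimage_symm, mem_preimage, mem_range_sigmaLexMk, mem_range_sigmaLexMk]
    exact this.symm
  exact ⟨y, ⟨OrderEmbedding.orderIso.trans <| ((F.strictMono.strictMonoOn _).orderIso _ _).trans <|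
    (OrderIso.setCongr _ _ himage).trans OrderEmbedding.orderIso.symm⟩⟩

end SigmaLex

section BackAndForth

variable {ι ι₁ ι₂ : Type} {c : ℚ → ι} {c₁ : ℚ → ι₁} {c₂ : ℚ → ι₂} {R : ι₁ → ι₂ → Prop}

lemma DenseColoring.surjective (hc : DenseColoring c) : Function.Surjective c := fun j ↦
  let ⟨x, _, _, hx⟩ := hc 0 1 one_pos j
  ⟨x, hx⟩

lemma DenseColoring.exists_between_finsets (hc : DenseColoring c) (lo hi : Finset ℚ)
    (h : ∀ x ∈ lo, ∀ y ∈ hi, x < y) (j : ι) :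
    ∃ b, (∀ x ∈ lo, x < b) ∧ (∀ y ∈ hi, b < y) ∧ c b = j := by
  obtain ⟨m, hlo, hhi⟩ := Order.exists_between_finsets lo hi h
  obtain ⟨m', hlo', hhi'⟩ := Order.exists_between_finsets (insert m lo) hi <| by
    simpa only [Finset.forall_mem_insert] using ⟨hhi, h⟩
  obtain ⟨b, hmb, hbm', rfl⟩ := hc m m' (hlo' m (Finset.mem_insert_self _ _)) j
  exact ⟨b, fun x hx ↦ (hlo x hx).trans hmb, fun y hy ↦ hbm'.trans (hhi' y hy), rfl⟩

variable (c₁ c₂ R) in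
def ColoredPartialIso : Type :=
  { s : Finset (ℚ × ℚ) //
    (∀ p ∈ s, ∀ q ∈ s, cmp p.1 q.1 = cmp p.2 q.2) ∧ ∀ p ∈ s, R (c₁ p.1) (c₂ p.2) }

namespace ColoredPartialIso

instance : Preorder (ColoredPartialIso c₁ c₂ R) := Subtype.preorder _

instance : Inhabited (ColoredPartialIso c₁ c₂ R) := ⟨⟨∅, by simp⟩⟩

def comm (f : ColoredPartialIso c₁ c₂ R) : ColoredPartialIso c₂ c₁ (flip R) :=
  ⟨f.1.image Prod.swap, by
    simp only [Finset.forall_mem_image]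
    exact ⟨fun p hp q hq ↦ (f.2.1 p hp q hq).symm, f.2.2⟩⟩

lemma exists_across (hc₂ : DenseColoring c₂) (hR : ∀ j, ∃ j', R j j')
    (f : ColoredPartialIso c₁ c₂ R) (a : ℚ) :
    ∃ b, R (c₁ a) (c₂ b) ∧ ∀ p ∈ f.1, cmp p.1 a = cmp p.2 b := by
  by_cases h : ∃ b, (a, b) ∈ f.1
  · obtain ⟨b, hb⟩ := h
    exact ⟨b, f.2.2 _ hb, fun p hp ↦ f.2.1 _ hp _ hb⟩
  obtain ⟨j', hj'⟩ := hR (c₁ a)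
  have hsep : ∀ x ∈ {p ∈ f.1 | p.1 < a}.image Prod.snd,
      ∀ y ∈ {p ∈ f.1 | a < p.1}.image Prod.snd, x < y := by
    simp only [Finset.forall_mem_image, Finset.mem_filter]
    intro p hp q hq
    rw [← lt_iff_lt_of_cmp_eq_cmp (f.2.1 _ hp.1 _ hq.1)]
    exact hp.2.trans hq.2
  obtain ⟨b, hlo, hhi, rfl⟩ := hc₂.exists_between_finsets _ _ hsep j'
  refine ⟨b, hj', fun p hp ↦ ?_⟩
  rcases lt_or_gt_of_ne (fun hpa ↦ h ⟨p.2, hpa ▸ hp⟩ : p.1 ≠ a) with hpa | hap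
  · have hpb := hlo _ (Finset.mem_image_of_mem _ (Finset.mem_filter.2 ⟨hp, hpa⟩))
    rw [(cmp_eq_lt_iff _ _).2 hpa, (cmp_eq_lt_iff _ _).2 hpb]
  · have hbp := hhi _ (Finset.mem_image_of_mem _ (Finset.mem_filter.2 ⟨hp, hap⟩))
    rw [(cmp_eq_gt_iff _ _).2 hap, (cmp_eq_gt_iff _ _).2 hbp]

lemma exists_ge_mem_left (hc₂ : DenseColoring c₂) (hR : ∀ j, ∃ j', R j j')
    (f : ColoredPartialIso c₁ c₂ R) (a : ℚ) :
    ∃ g : ColoredPartialIso c₁ c₂ R, (∃ b, (a, b) ∈ g.1) ∧ f ≤ g := by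
  obtain ⟨b, hab, hcmp⟩ := f.exists_across hc₂ hR a
  refine ⟨⟨insert (a, b) f.1, ?_⟩, ⟨b, Finset.mem_insert_self _ _⟩, Finset.subset_insert _ _⟩
  simp only [Finset.forall_mem_insert, cmp_self_eq_eq, true_and]
  refine ⟨⟨fun q hq ↦ ?_, fun p hp ↦ ⟨hcmp p hp, f.2.1 p hp⟩⟩, hab, f.2.2⟩
  rw [cmp_eq_cmp_symm]
  exact hcmp q hq

lemma exists_ge_mem_right (hc₁ : DenseColoring c₁) (hR : ∀ j', ∃ j, R j j')
    (f : ColoredPartialIso c₁ c₂ R) (b : ℚ) :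
    ∃ g : ColoredPartialIso c₁ c₂ R, (∃ a, (a, b) ∈ g.1) ∧ f ≤ g := by
  obtain ⟨g, ⟨a, hba⟩, hfg⟩ := f.comm.exists_ge_mem_left hc₁ hR b
  refine ⟨g.comm, ⟨a, Finset.mem_image_of_mem Prod.swap hba⟩, fun p hp ↦ ?_⟩
  exact Finset.mem_image.2 ⟨p.swap, hfg (Finset.mem_image_of_mem _ hp), p.swap_swap⟩

end ColoredPartialIso

-- The argument of `Order.iso_of_countable_dense`, with partial isomorphisms respecting colours.
theorem exists_orderIso_of_denseColoring (hc₁ : DenseColoring c₁) (hc₂ : DenseColoring c₂)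
    (hR₁ : ∀ j, ∃ j', R j j') (hR₂ : ∀ j', ∃ j, R j j') :
    ∃ g : ℚ ≃o ℚ, ∀ x, R (c₁ x) (c₂ (g x)) := by
  let cofinal : ℚ ⊕ ℚ → Order.Cofinal (ColoredPartialIso c₁ c₂ R)
    | .inl a => ⟨{f | ∃ b, (a, b) ∈ f.1}, fun f ↦ f.exists_ge_mem_left hc₂ hR₁ a⟩
    | .inr b => ⟨{f | ∃ a, (a, b) ∈ f.1}, fun f ↦ f.exists_ge_mem_right hc₁ hR₂ b⟩
  let I := Order.idealOfCofinals default cofinal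
  have hF (a : ℚ) : ∃ b, ∃ f ∈ I, (a, b) ∈ f.1 := by
    obtain ⟨f, ⟨b, hb⟩, hf⟩ := Order.cofinal_meets_idealOfCofinals default cofinal (.inl a)
    exact ⟨b, f, hf, hb⟩
  have hG (b : ℚ) : ∃ a, ∃ f ∈ I, (a, b) ∈ f.1 := by
    obtain ⟨f, ⟨a, ha⟩, hf⟩ := Order.cofinal_meets_idealOfCofinals default cofinal (.inr b)
    exact ⟨a, f, hf, ha⟩
  choose F hF using hF
  choose G hG using hG
  refine ⟨OrderIso.ofCmpEqCmp F G fun a b ↦ ?_, fun a ↦ ?_⟩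
  · obtain ⟨f, hf, ha⟩ := hF a
    obtain ⟨g, hg, hb⟩ := hG b
    obtain ⟨h, -, hfh, hgh⟩ := I.directed _ hf _ hg
    exact h.2.1 _ (hfh ha) _ (hgh hb)
  · obtain ⟨f, -, ha⟩ := hF a
    exact f.2.2 _ ha

end BackAndForth

noncomputable def OrderIso.sigmaLexCongr {ι κ : Type*} [LinearOrder ι] [Preorder κ] {α : ι → Type*}
    {β : κ → Type*} [∀ i, LinearOrder (α i)] [∀ k, Preorder (β k)] (g : ι ≃o κ)
    (e : ∀ i, α i ≃o β (g i)) : (Σₗ i, α i) ≃o Σₗ k, β k :=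
  let E := Equiv.sigmaCongr g.toEquiv fun i ↦ (e i).toEquiv
  StrictMono.orderIsoOfSurjective (toLex ∘ E ∘ ofLex) (by
    rintro ⟨x, a⟩ ⟨y, b⟩ h
    rcases Sigma.Lex.lt_def.1 h with h | ⟨hxy, h⟩
    · exact Sigma.Lex.lt_def.2 (Or.inl (g.lt_iff_lt.2 h))
    · dsimp only at hxy
      subst hxy
      exact Sigma.Lex.lt_def.2 (Or.inr ⟨rfl, (e x).strictMono h⟩))
    (toLex.surjective.comp (E.surjective.comp ofLex.surjective))

theorem shuffle_omega_prefixed_general {i : ℕ} {ι₁ ι₂ : Type}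
    (L₁ : ι₁ → Type) (L₂ : ι₂ → Type)
    [∀ j, LinearOrder (L₁ j)] [∀ j, LinearOrder (L₂ j)]
    (h₁ : ∀ j, OmegaIPlus i (L₁ j)) (h₂ : ∀ j, OmegaIPlus i (L₂ j))
    (c₁ : ℚ → ι₁) (c₂ : ℚ → ι₂)
    (hc₁ : DenseColoring c₁) (hc₂ : DenseColoring c₂) :
    Nonempty ((Lex ((x : ℚ) × L₁ (c₁ x))) ≃o (Lex ((x : ℚ) × L₂ (c₂ x)))) ↔
      ((∀ j, ∃ j', Nonempty (L₁ j ≃o L₂ j')) ∧ (∀ j', ∃ j, Nonempty (L₁ j ≃o L₂ j'))) := by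
  constructor
  · rintro ⟨F⟩
    refine ⟨fun j ↦ ?_, fun j' ↦ ?_⟩
    · obtain ⟨x, rfl⟩ := hc₁.surjective j
      obtain ⟨y, hy⟩ := F.exists_orderIso_fiber (fun x ↦ h₁ (c₁ x)) (fun y ↦ h₂ (c₂ y)) x
      exact ⟨c₂ y, hy⟩
    · obtain ⟨y, rfl⟩ := hc₂.surjective j'
      obtain ⟨x, ⟨e⟩⟩ := F.symm.exists_orderIso_fiber (fun y ↦ h₂ (c₂ y)) (fun x ↦ h₁ (c₁ x)) y
      exact ⟨c₁ x, ⟨e.symm⟩⟩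
  · rintro ⟨hA, hB⟩
    obtain ⟨g, hg⟩ := exists_orderIso_of_denseColoring hc₁ hc₂ hA hB
    exact ⟨OrderIso.sigmaLexCongr g fun x ↦ (hg x).some⟩

/-- Let `L₁`, `L₂` be countable classes of linear orders, each member isomorphic to
`ω·i + K` with `ω·i` not an interval of `K`. Then `Shuf(L₁) ≅ Shuf(L₂)` iff the classes
contain the same linear orders up to isomorphism. -/
theorem shuffle_omega_prefixed {i : ℕ} (hi : 1 ≤ i) {ι₁ ι₂ : Type}
    [Countable ι₁] [Countable ι₂]
    (L₁ : ι₁ → Type) (L₂ : ι₂ → Type)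
    [∀ j, LinearOrder (L₁ j)] [∀ j, LinearOrder (L₂ j)]
    (h₁ : ∀ j, OmegaIPlus i (L₁ j)) (h₂ : ∀ j, OmegaIPlus i (L₂ j))
    (c₁ : ℚ → ι₁) (c₂ : ℚ → ι₂)
    (hc₁ : DenseColoring c₁) (hc₂ : DenseColoring c₂) :
    Nonempty ((Lex ((x : ℚ) × L₁ (c₁ x))) ≃o (Lex ((x : ℚ) × L₂ (c₂ x)))) ↔
      ((∀ j, ∃ j', Nonempty (L₁ j ≃o L₂ j')) ∧ (∀ j', ∃ j, Nonempty (L₁ j ≃o L₂ j'))) :=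
  shuffle_omega_prefixed_general L₁ L₂ h₁ h₂ c₁ c₂ hc₁ hc₂
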